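/- For n ≥ 3, let F be a set of at most n − 2 edges of Q_n. Then every edge of Q_n not in F lies on some Hamiltonian cycle of Q_n − F. -/

import Mathlib

/-- The `n`-dimensional hypercube: vertices are functions `Fin n → Bool`,
adjacent iff they differ in exactly one coordinate. -/
def Q (n : ℕ) : SimpleGraph (Fin n → Bool) where
  Adj x y := ∃! i, x i ≠ y i
  symm := by
    constructor
    rintro x y ⟨i, hi, hu⟩
    exact ⟨i, hi.symm, fun j hj => hu j hj.symm⟩
  loopless := by
    constructor
    rintro x ⟨i, hi, -⟩
    exact hi rfl

/-- `M` is a matching (pairwise vertex-disjoint set of edges) of the graph `G`. -/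
def IsMatchingOf {V : Type*} (G : SimpleGraph V) (M : Finset (Sym2 V)) : Prop :=
  (M : Set (Sym2 V)) ⊆ G.edgeSet ∧
    (M : Set (Sym2 V)).Pairwise fun e f => ∀ v, v ∈ e → v ∉ f

/-- The edge `e` is `j`-dimensional: its endpoints differ exactly in coordinate `j`. -/
def DimEdge (n : ℕ) (j : Fin n) (e : Sym2 (Fin n → Bool)) : Prop :=
  ∃ x y, e = s(x, y) ∧ x j ≠ y j ∧ ∀ i, i ≠ j → x i = y i

/-- The distance between two edges: minimum distance between their endpoints. -/
noncomputable def edgeDist (n : ℕ) (e f : Sym2 (Fin n → Bool)) : ℕ :=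
  sInf {d | ∃ u v, u ∈ e ∧ v ∈ f ∧ d = (Q n).dist u v}

/-! Induction on `n` proves more: for `1 ≤ n` and at most `n - 2` faults, any two vertices of
opposite parity are joined by a Hamiltonian path of `Q n - F` (Hamiltonian laceability).
Split `Q (n + 1)` along the direction `d` of some fault, so that each face `x d = b`, a copy of
`Q n`, keeps at most `n - 2` faults, and at most `n - 1` vertices of `Q n` have a faulty crossing
edge. If the endpoints lie in one face, a Hamiltonian path there has `2 ^ n - 1` edges, so one of
them, `ab`, has both crossing edges intact; replace it by a detour through the other face along a
Hamiltonian path from `a` to `b`. If the endpoints lie in different faces, cross at one of the `n`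
neighbours of the first endpoint whose crossing edge is intact. Finally a Hamiltonian path between
the ends of the edge `e` closes up to a Hamiltonian cycle through `e`. -/

open Finset SimpleGraph

theorem hammingDist_insertNth {n : ℕ} {β : Type*} [DecidableEq β] (d : Fin (n + 1)) (a a' : β)
    (x y : Fin n → β) :
    hammingDist (Fin.insertNth d a x : Fin (n + 1) → β) (Fin.insertNth d a' y) =
      (if a = a' then 0 else 1) + hammingDist x y := by
  simp only [hammingDist, card_filter, Fin.sum_univ_succAbove _ d, Fin.insertNth_apply_same,
    Fin.insertNth_apply_succAbove, ite_not]

theorem List.count_map_insertNth {n : ℕ} {β : Type*} [DecidableEq β] (d : Fin (n + 1)) (a : β)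
    (l : List (Fin n → β)) (x : Fin (n + 1) → β) :
    (l.map (Fin.insertNth d a)).count x = if x d = a then l.count (Fin.removeNth d x) else 0 := by
  split_ifs with hx
  · conv_lhs => rw [← Fin.insertNth_self_removeNth d x, hx]
    exact List.count_map_of_injective _ _ (Fin.insertNth_right_injective (α := fun _ => β) a) _
  · simp only [List.count_eq_zero, List.mem_map, not_exists, not_and]
    rintro y - rfl
    simp at hx

namespace SimpleGraph.Walk

variable {V : Type*} [DecidableEq V] {G : SimpleGraph V} {u v : V}

theorem IsHamiltonian.isHamiltonianCycle_cons {p : G.Walk u v} (hp : p.IsHamiltonian)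
    (h : G.Adj v u) (hlen : p.length ≠ 1) : (cons h p).IsHamiltonianCycle := by
  rw [isHamiltonianCycle_iff_isCycle_and_support_count_tail_eq_one]
  refine ⟨(cons_isCycle_iff p h).2 ⟨hp.isPath, fun he => hlen ?_⟩,
    fun a => by simpa using hp a⟩
  exact hp.isPath.length_eq_one_of_mem_edges (Sym2.eq_swap ▸ he)

theorem IsPath.exists_mem_darts_fst_snd_notMem {p : G.Walk u v} (hp : p.IsPath)
    (W : Finset V) (hW : 2 * #W < p.length) : ∃ d ∈ p.darts, d.fst ∉ W ∧ d.snd ∉ W := by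
  have hcount {l : List V} (hl : l.Nodup) : l.countP (· ∈ W) ≤ #W := by
    rw [List.countP_eq_length_filter, ← List.toFinset_card_of_nodup (hl.filter _)]
    exact card_le_card fun x hx => by simp_all
  have hfst := hcount (l := p.darts.map (·.fst))
    (by rw [map_fst_darts]; exact hp.support_nodup.sublist (List.dropLast_sublist _))
  have hsnd := hcount (l := p.darts.map (·.snd))
    (by rw [map_snd_darts]; exact hp.support_nodup.sublist (List.tail_sublist _))
  rw [List.countP_map] at hfst hsnd
  by_contra! h
  have hsplit := List.length_eq_countP_add_countP (fun d : G.Dart => d.fst ∈ W) (l := p.darts)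
  have hmono : p.darts.countP (fun d => ¬ d.fst ∈ W) ≤ p.darts.countP (fun d => d.snd ∈ W) :=
    List.countP_mono_left fun d hd hf => by simpa using h d hd (by simpa using hf)
  simp only [length_darts, Function.comp_def, decide_not, decide_eq_true_eq]
    at hsplit hmono hfst hsnd
  omega

end SimpleGraph.Walk

namespace Q

variable {n : ℕ}

theorem adj_iff_hammingDist {x y : Fin n → Bool} : (Q n).Adj x y ↔ hammingDist x y = 1 :=
  Fintype.existsUnique_iff_card_one _

theorem adj_insertNth_iff (d : Fin (n + 1)) (b : Bool) {x y : Fin n → Bool} :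
    (Q (n + 1)).Adj (Fin.insertNth d b x) (Fin.insertNth d b y) ↔ (Q n).Adj x y := by
  simp [adj_iff_hammingDist, hammingDist_insertNth]

theorem adj_insertNth_not (d : Fin (n + 1)) (b : Bool) (x : Fin n → Bool) :
    (Q (n + 1)).Adj (Fin.insertNth d b x) (Fin.insertNth d (!b) x) := by
  simp [adj_iff_hammingDist, hammingDist_insertNth]

theorem adj_update_not (x : Fin n → Bool) (i : Fin n) :
    (Q n).Adj x (Function.update x i (!x i)) :=
  ⟨i, by simp, fun j hj => by_contra fun hji => hj (Function.update_of_ne hji ..).symm⟩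

def parity (x : Fin n → Bool) : ZMod 2 := ∑ i, if x i then 1 else 0

theorem parity_insertNth (d : Fin (n + 1)) (b : Bool) (x : Fin n → Bool) :
    parity (Fin.insertNth d b x) = (if b then 1 else 0) + parity x := by
  simp [parity, Fin.sum_univ_succAbove _ d]

theorem parity_ne_of_adj {x y : Fin n → Bool} (h : (Q n).Adj x y) : parity x ≠ parity y := by
  obtain ⟨i, hi, hu⟩ := h
  cases n with
  | zero => exact i.elim0
  | succ n =>
    have hr : Fin.removeNth i x = Fin.removeNth i y :=
      funext fun j => not_not.1 fun h => Fin.succAbove_ne i j (hu _ h)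
    rw [← Fin.insertNth_self_removeNth i x, ← Fin.insertNth_self_removeNth i y,
      parity_insertNth, parity_insertNth, hr]
    revert hi
    cases x i <;> cases y i <;> simp

def IsHamiltonianLaceable (G : SimpleGraph (Fin n → Bool)) : Prop :=
  ∀ u v, parity u ≠ parity v → ∃ p : G.Walk u v, p.IsHamiltonian

theorem isHamiltonianLaceable_one : IsHamiltonianLaceable (Q 1) := by
  intro u v huv
  have hne : u ≠ v := by rintro rfl; exact huv rfl
  have hdist : ∀ u v : Fin 1 → Bool, u ≠ v → hammingDist u v = 1 := by decide
  have hcover : ∀ u v x : Fin 1 → Bool, u ≠ v → [u, v].count x = 1 := by decide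
  exact ⟨.cons (adj_iff_hammingDist.2 (hdist u v hne)) .nil,
    fun x => by simpa using hcover u v x hne⟩

section Faces

variable {F : Finset (Sym2 (Fin (n + 1) → Bool))}

def faceFaults (d : Fin (n + 1)) (b : Bool) (F : Finset (Sym2 (Fin (n + 1) → Bool))) :
    Finset (Sym2 (Fin n → Bool)) :=
  {s | s.map (Fin.insertNth d b) ∈ F}

def crossFaults (d : Fin (n + 1)) (F : Finset (Sym2 (Fin (n + 1) → Bool))) :
    Finset (Fin n → Bool) :=
  {x | s(Fin.insertNth d false x, Fin.insertNth d true x) ∈ F}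

theorem card_crossFaults_le (d : Fin (n + 1)) : #(crossFaults d F) ≤ #F :=
  card_le_card_of_injOn (fun x => s(Fin.insertNth d false x, Fin.insertNth d true x))
    (fun x hx => by simpa [crossFaults] using hx)
    (fun x _ y _ h => by simpa [Sym2.eq_iff, Fin.insertNth_inj] using h)

theorem exists_card_faceFaults_le (hF : ↑F ⊆ (Q (n + 1)).edgeSet) :
    ∃ d, ∀ b, #(faceFaults d b F) ≤ #F - 1 := by
  obtain rfl | ⟨f, hf⟩ := F.eq_empty_or_nonempty
  · exact ⟨0, fun b => by simp [faceFaults]⟩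
  induction f using Sym2.ind with | _ x y => ?_
  obtain ⟨d, hd, -⟩ := hF hf
  refine ⟨d, fun b => ?_⟩
  rw [← card_erase_of_mem hf]
  refine card_le_card_of_injOn (Sym2.map (Fin.insertNth (α := fun _ => Bool) d b)) (fun s hs => ?_)
    (Sym2.map.injective (Fin.insertNth_right_injective _)).injOn
  induction s using Sym2.ind with | _ p q => ?_
  refine mem_erase.2 ⟨fun h => hd ?_, by simpa [faceFaults] using hs⟩
  rw [Sym2.map_mk, Sym2.eq_iff] at h
  rcases h with ⟨rfl, rfl⟩ | ⟨rfl, rfl⟩ <;> simp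

theorem faceFaults_subset_edgeSet (hF : ↑F ⊆ (Q (n + 1)).edgeSet) (d : Fin (n + 1)) (b : Bool) :
    ↑(faceFaults d b F) ⊆ (Q n).edgeSet := by
  intro s hs
  induction s using Sym2.ind with | _ x y => ?_
  exact (adj_insertNth_iff d b).1 (hF (by simpa [faceFaults] using hs))

def faceHom (d : Fin (n + 1)) (b : Bool) (F : Finset (Sym2 (Fin (n + 1) → Bool))) :
    (Q n).deleteEdges ↑(faceFaults d b F) →g (Q (n + 1)).deleteEdges ↑F where
  toFun := Fin.insertNth (α := fun _ => Bool) d b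
  map_rel' {x y} h := by
    rw [deleteEdges_adj] at h ⊢
    exact ⟨(adj_insertNth_iff d b).2 h.1, by simpa [faceFaults] using h.2⟩

theorem adj_insertNth_not_of_notMem_crossFaults {d : Fin (n + 1)} {x : Fin n → Bool}
    (hx : x ∉ crossFaults d F) (b : Bool) :
    ((Q (n + 1)).deleteEdges ↑F).Adj (Fin.insertNth d b x) (Fin.insertNth d (!b) x) := by
  refine (deleteEdges_adj ..).2 ⟨adj_insertNth_not d b x, ?_⟩
  cases b <;> simpa [crossFaults, Sym2.eq_swap] using hx

variable {d : Fin (n + 1)}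

theorem exists_isHamiltonian_insertNth_not
    (hface : ∀ b, IsHamiltonianLaceable ((Q n).deleteEdges ↑(faceFaults d b F)))
    (hcross : #(crossFaults d F) < n) (b : Bool) {u v : Fin n → Bool}
    (huv : parity u = parity v) :
    ∃ p : ((Q (n + 1)).deleteEdges ↑F).Walk (Fin.insertNth d b u) (Fin.insertNth d (!b) v),
      p.IsHamiltonian := by
  have hinj : Function.Injective fun i => Function.update u i (!u i) := fun i j h =>
    by_contra fun hij => by simpa [Function.update_of_ne hij] using congrFun h i
  obtain ⟨w, hw, hwW⟩ := exists_mem_notMem_of_card_lt_card (s := crossFaults d F)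
    (t := univ.image fun i => Function.update u i (!u i))
    (by rwa [card_image_of_injective _ hinj, card_univ, Fintype.card_fin])
  obtain ⟨i, -, rfl⟩ := mem_image.1 hw
  have hpar := parity_ne_of_adj (adj_update_not u i)
  obtain ⟨P₀, hP₀⟩ := hface b u _ hpar
  obtain ⟨P₁, hP₁⟩ := hface (!b) _ v (huv ▸ hpar.symm)
  refine ⟨(P₀.map (faceHom d b F)).append
    (.cons (adj_insertNth_not_of_notMem_crossFaults hwW b) (P₁.map (faceHom d (!b) F))),
    fun x => ?_⟩
  simp only [faceHom, RelHom.coeFn_mk, Walk.support_append, Walk.support_map, Walk.support_cons,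
    List.tail_cons, List.count_append, List.count_map_insertNth, hP₀ _, hP₁ _]
  cases x d <;> cases b <;> simp

theorem exists_isHamiltonian_insertNth_same
    (hface : ∀ b, IsHamiltonianLaceable ((Q n).deleteEdges ↑(faceFaults d b F)))
    (hcross : 2 * #(crossFaults d F) < 2 ^ n - 1) (b : Bool) {u v : Fin n → Bool}
    (huv : parity u ≠ parity v) :
    ∃ p : ((Q (n + 1)).deleteEdges ↑F).Walk (Fin.insertNth d b u) (Fin.insertNth d b v),
      p.IsHamiltonian := by
  obtain ⟨P₀, hP₀⟩ := hface b u v huv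
  obtain ⟨e, he, hfst, hsnd⟩ := hP₀.isPath.exists_mem_darts_fst_snd_notMem (crossFaults d F)
    (by simpa [hP₀.length_eq] using hcross)
  obtain ⟨q₁, q₂, rfl⟩ := (Walk.isSubwalk_toWalk_adj_iff_mem_darts P₀).2 he
  obtain ⟨P₁, hP₁⟩ := hface (!b) e.fst e.snd (parity_ne_of_adj e.adj.1)
  refine ⟨(q₁.map (faceHom d b F)).append
    (.cons (adj_insertNth_not_of_notMem_crossFaults hfst b) ((P₁.map (faceHom d (!b) F)).append
      (.cons (adj_insertNth_not_of_notMem_crossFaults hsnd b).symm (q₂.map (faceHom d b F))))),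
    fun x => ?_⟩
  have := hP₀ (Fin.removeNth d x)
  simp only [Walk.support_append, Walk.support_cons, Walk.support_nil, List.tail_cons,
    List.append_assoc, List.cons_append, List.nil_append, Walk.cons_tail_support, List.count_append,
    faceHom, RelHom.coeFn_mk, Walk.support_map, List.count_map_insertNth, hP₁ _] at this ⊢
  cases x d <;> cases b <;> simp [this]

theorem isHamiltonianLaceable_of_faces
    (hface : ∀ b, IsHamiltonianLaceable ((Q n).deleteEdges ↑(faceFaults d b F)))
    (hsame : 2 * #(crossFaults d F) < 2 ^ n - 1) (hopp : #(crossFaults d F) < n) :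
    IsHamiltonianLaceable ((Q (n + 1)).deleteEdges ↑F) := by
  intro u v huv
  rw [← Fin.insertNth_self_removeNth d u, ← Fin.insertNth_self_removeNth d v] at huv ⊢
  rw [parity_insertNth, parity_insertNth] at huv
  by_cases h : v d = u d
  · rw [h] at huv ⊢
    exact exists_isHamiltonian_insertNth_same hface hsame _ (by simpa using huv)
  · rw [Bool.eq_not_of_ne h] at huv ⊢
    refine exists_isHamiltonian_insertNth_not hface hopp _ ?_
    generalize parity (Fin.removeNth d u) = a, parity (Fin.removeNth d v) = c at huv ⊢
    revert a c
    cases u d <;> decide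

end Faces

theorem isHamiltonianLaceable_deleteEdges (hn : 1 ≤ n) {F : Finset (Sym2 (Fin n → Bool))}
    (hF : ↑F ⊆ (Q n).edgeSet) (hcard : #F ≤ n - 2) :
    IsHamiltonianLaceable ((Q n).deleteEdges ↑F) := by
  induction n, hn using Nat.le_induction with
  | base =>
    obtain rfl : F = ∅ := card_eq_zero.1 (by omega)
    simpa using isHamiltonianLaceable_one
  | succ n hn ih =>
    obtain ⟨d, hd⟩ := exists_card_faceFaults_le hF
    have hcross := (card_crossFaults_le d).trans (show #F ≤ n - 1 by omega)
    obtain ⟨k, rfl⟩ : ∃ k, n = k + 1 := ⟨n - 1, by omega⟩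
    refine isHamiltonianLaceable_of_faces
      (fun b => ih (faceFaults_subset_edgeSet hF d b) ((hd b).trans (by omega))) ?_ (by omega)
    have := Nat.lt_two_pow_self (n := k)
    rw [pow_succ]
    omega

end Q

theorem stmt_9 (n : ℕ) (hn : 3 ≤ n) (F : Finset (Sym2 (Fin n → Bool)))
    (hF : (F : Set (Sym2 (Fin n → Bool))) ⊆ (Q n).edgeSet) (hcard : F.card ≤ n - 2)
    (e : Sym2 (Fin n → Bool)) (he : e ∈ (Q n).edgeSet) (hef : e ∉ F) :
    ∃ (v : Fin n → Bool) (c : ((Q n).deleteEdges ↑F).Walk v v),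
      c.IsHamiltonianCycle ∧ e ∈ c.edges := by
  induction e using Sym2.ind with | _ x y => ?_
  have hxy : (Q n).Adj x y := he
  obtain ⟨p, hp⟩ :=
    Q.isHamiltonianLaceable_deleteEdges (by omega) hF hcard x y (Q.parity_ne_of_adj hxy)
  have hyx : ((Q n).deleteEdges ↑F).Adj y x :=
    (deleteEdges_adj ..).2 ⟨hxy.symm, by rwa [Sym2.eq_swap]⟩
  have hlen : p.length ≠ 1 := by
    have := Nat.pow_le_pow_right two_pos (show 2 ≤ n by omega)
    rw [hp.length_eq]
    simp only [Fintype.card_fun, Fintype.card_bool, Fintype.card_fin]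
    omega
  exact ⟨y, .cons hyx p, hp.isHamiltonianCycle_cons hyx hlen, by simp [Sym2.eq_swap]⟩
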